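/- arXiv:2311.15449 — 6 statements merged into one kernel-verified Lean document; each statement's English description precedes it below -/
import Mathlib

section
/- Let R̄ be a commutative ring of characteristic p and S̄ a commutative R̄-algebra with structure morphism ψ. Suppose (s_i)_{i∈I} is a generating family of S̄ as an R̄-module. Then the following are equivalent: (1) the relative Frobenius Frob_{S̄/R̄} : S̄ ⊗_{ψ, Frob_{R̄}} R̄ → S̄ is surjective; (2) for all l ∈ ℕ, the family (s_i^{p^l})_{i∈I} generates S̄ as an R̄-module; (3) the family (s_i^p)_{i∈I} generates S̄ as an R̄-module. -/
/-!
Additivity of `x ↦ xᵖ` in characteristic `p` shows that, once `(sᵢ)` generates `S`, the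
`R`-span of the `sᵢᵖ` is the `R`-span of all `p`-th powers, and this span is exactly the
image of the relative Frobenius. So (1) and (3) both say that the `p`-th powers span `S`, and
iterating (3) on the generating family `(sᵢ^{pˡ})` gives (2).
-/

/-- `R` viewed as an `R`-module through the Frobenius endomorphism `a ↦ aᵖ`. -/
def FrobTwist (p : ℕ) (R : Type*) : Type _ := R

/-- The identity of `R`, viewed as a map `FrobTwist p R → R`. -/
def FrobTwist.val {p : ℕ} {R : Type*} (x : FrobTwist p R) : R := x

instance (p : ℕ) (R : Type*) [CommRing R] : AddCommGroup (FrobTwist p R) :=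
  inferInstanceAs (AddCommGroup R)

noncomputable instance (p : ℕ) [Fact p.Prime] (R : Type*) [CommRing R] [CharP R p] :
    Module R (FrobTwist p R) :=
  Module.compHom (R := R) R (frobenius R p)

/-- The relative Frobenius `S ⊗_{ψ, Frob_R} R → S`, `s ⊗ r ↦ s^p * ψ(r)`, as an additive
map on the tensor product of `S` (with its usual `R`-module structure) and `R` (with the
Frobenius-twisted `R`-module structure). -/
noncomputable def relativeFrobenius (p : ℕ) [Fact p.Prime] (R S : Type*) [CommRing R]
    [CommRing S] [Algebra R S] [CharP R p] [CharP S p] :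
    TensorProduct R S (FrobTwist p R) →+ S :=
  TensorProduct.liftAddHom
    (AddMonoidHom.mk'
      (fun s => AddMonoidHom.mk' (fun r : FrobTwist p R => s ^ p * algebraMap R S r.val)
        (fun r r' => by
          show s ^ p * algebraMap R S (r.val + r'.val) = _
          rw [map_add, mul_add]))
      (fun s t => by
        ext r
        show (s + t) ^ p * algebraMap R S r.val =
          s ^ p * algebraMap R S r.val + t ^ p * algebraMap R S r.val
        haveI : ExpChar S p := ExpChar.prime Fact.out
        rw [add_pow_char, add_mul]))
    (fun a s r => by
      show (a • s) ^ p * algebraMap R S r.val =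
        s ^ p * algebraMap R S (frobenius R p a * r.val)
      rw [Algebra.smul_def, mul_pow, ← map_pow, map_mul, frobenius_def]
      ring)

open Submodule Set TensorProduct

section PowSpan

variable {R S : Type*} [CommSemiring R] [CommSemiring S] [Algebra R S] (p : ℕ) [ExpChar S p]

theorem pow_mem_span_range_pow {ι : Type*} {t : ι → S} (ht : span R (range t) = ⊤) (x : S) :
    x ^ p ∈ span R (range fun i => t i ^ p) := by
  have hx : x ∈ span R (range t) := ht ▸ mem_top
  induction hx using span_induction with
  | mem y hy => obtain ⟨i, rfl⟩ := hy; exact subset_span ⟨i, rfl⟩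
  | zero => rw [zero_pow (expChar_pos S p).ne']; exact zero_mem _
  | add a b _ _ ha hb => rw [add_pow_expChar]; exact add_mem ha hb
  | smul r a _ ha => rw [smul_pow]; exact smul_mem _ _ ha

theorem span_range_pow_eq_span_pow {ι : Type*} {t : ι → S} (ht : span R (range t) = ⊤) :
    span R (range fun i => t i ^ p) = span R (range fun x : S => x ^ p) :=
  le_antisymm (span_mono (range_comp_subset_range t _))
    (span_le.mpr <| range_subset_iff.mpr (pow_mem_span_range_pow p ht))

end PowSpan

section RelativeFrobenius

variable (p : ℕ) [Fact p.Prime] (R S : Type*) [CommRing R] [CommRing S] [Algebra R S]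
  [CharP R p] [CharP S p]

theorem relativeFrobenius_tmul (x : S) (r : FrobTwist p R) :
    relativeFrobenius p R S (x ⊗ₜ r) = x ^ p * algebraMap R S r.val :=
  rfl

theorem range_relativeFrobenius :
    range (relativeFrobenius p R S) = span R (range fun x : S => x ^ p) := by
  apply Subset.antisymm
  · rintro _ ⟨z, rfl⟩
    induction z using TensorProduct.induction_on with
    | zero => rw [map_zero]; exact zero_mem _
    | tmul x r =>
      rw [relativeFrobenius_tmul, mul_comm, ← Algebra.smul_def]
      exact smul_mem _ _ (subset_span ⟨x, rfl⟩)
    | add z w hz hw => rw [map_add]; exact add_mem hz hw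
  · intro y hy
    obtain ⟨c, rfl⟩ := Finsupp.mem_span_range_iff_exists_finsupp.mp hy
    refine ⟨c.sum fun x a => x ⊗ₜ[R] (a : FrobTwist p R), ?_⟩
    rw [map_finsuppSum]
    refine Finsupp.sum_congr fun x _ => ?_
    show x ^ p * algebraMap R S (c x) = c x • x ^ p
    rw [mul_comm, Algebra.smul_def]

end RelativeFrobenius

/-- for a commutative algebra `S` over a commutative ring `R` of
characteristic `p`, generated as an `R`-module by a family `s`, the following are
equivalent: (1) the relative Frobenius `S ⊗_{ψ, Frob_R} R → S` is surjective;
(2) for all `l`, the family of `p^l`-th powers of the `s i` generates `S` as an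
`R`-module; (3) the family of `p`-th powers of the `s i` generates `S` as an
`R`-module. -/
theorem characterise_relatively_semiperfect (p : ℕ) [Fact p.Prime] (R S : Type*)
    [CommRing R] [CommRing S] [Algebra R S] [CharP R p] [CharP S p]
    {I : Type*} (s : I → S) (hgen : Submodule.span R (Set.range s) = ⊤) :
    List.TFAE
      [Function.Surjective (relativeFrobenius p R S),
       ∀ l : ℕ, Submodule.span R (Set.range fun i => s i ^ p ^ l) = ⊤,
       Submodule.span R (Set.range fun i => s i ^ p) = ⊤] := by
  have hspan := span_range_pow_eq_span_pow (R := R) p hgen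
  tfae_have 1 ↔ 3 := by
    rw [← range_eq_univ, range_relativeFrobenius, coe_eq_univ, hspan]
  tfae_have 3 → 2 := by
    intro h l
    induction l with
    | zero => simpa using hgen
    | succ l ih => simp only [pow_succ, pow_mul]; rw [span_range_pow_eq_span_pow p ih, ← hspan, h]
  tfae_have 2 → 3 := fun h => by simpa using h 1
  tfae_finish
end

section
/- Let R̄ be a commutative ring of characteristic p and S̄ a commutative R̄-algebra which is free as an R̄-module with basis (s_i)_{i∈I}. Then the following are equivalent: (1) S̄ is relatively perfect over R̄ (the relative Frobenius is an isomorphism); (2) for every l ∈ ℕ, the family (s_i^{p^l})_{i∈I} is an R̄-basis of S̄; (3) the family (s_i^p)_{i∈I} is an R̄-basis of S̄. -/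
open TensorProduct

theorem Finsupp.bijective_linearCombination_iff {R M ι : Type*} [Ring R] [AddCommGroup M]
    [Module R M] (v : ι → M) :
    Function.Bijective (Finsupp.linearCombination R v) ↔
      LinearIndependent R v ∧ Submodule.span R (Set.range v) = ⊤ := by
  rw [linearIndependent_iff_injective_finsuppLinearCombination, ← Finsupp.range_linearCombination,
    LinearMap.range_eq_top]
  rfl

def FrobTwist.addEquiv (p : ℕ) (R : Type*) [CommRing R] : R ≃+ FrobTwist p R where
  toFun x := x
  invFun x := x
  left_inv _ := rfl
  right_inv _ := rfl
  map_add' _ _ := rfl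

namespace Module.Basis

variable {p : ℕ} [Fact p.Prime] {R S : Type*} [CommRing R] [CommRing S] [Algebra R S]
  [CharP R p] {I : Type*}

noncomputable def frobTwistTensorEquiv {M : Type*} [AddCommGroup M] [Module R M]
    [DecidableEq I] (b : Basis I R M) : (I →₀ R) ≃+ M ⊗[R] FrobTwist p R :=
  (Finsupp.mapRange.addEquiv (FrobTwist.addEquiv p R)).trans <|
    (finsuppScalarLeft R (FrobTwist p R) I).symm.toAddEquiv.trans
      (TensorProduct.congr b.repr (LinearEquiv.refl R (FrobTwist p R))).symm.toAddEquiv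

theorem frobTwistTensorEquiv_single {M : Type*} [AddCommGroup M] [Module R M] [DecidableEq I]
    (b : Basis I R M) (i : I) (r : R) :
    b.frobTwistTensorEquiv (p := p) (Finsupp.single i r) = b i ⊗ₜ FrobTwist.addEquiv p R r := by
  change (TensorProduct.congr b.repr (LinearEquiv.refl R (FrobTwist p R))).symm
    ((finsuppScalarLeft R (FrobTwist p R) I).symm
      (Finsupp.mapRange (FrobTwist.addEquiv p R) (map_zero _) (Finsupp.single i r))) = _
  rw [Finsupp.mapRange_single, finsuppScalarLeft_symm_apply_single,
    TensorProduct.congr_symm_tmul, LinearEquiv.refl_symm, LinearEquiv.refl_apply,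
    repr_symm_single_one]

theorem relativeFrobenius_frobTwistTensorEquiv [CharP S p] [DecidableEq I] (b : Basis I R S)
    (x : I →₀ R) :
    relativeFrobenius p R S (b.frobTwistTensorEquiv x) =
      Finsupp.linearCombination R (fun i => b i ^ p) x := by
  induction x using Finsupp.induction_linear with
  | zero => simp only [map_zero]
  | add x y hx hy => simp only [map_add, hx, hy]
  | single i r =>
    rw [frobTwistTensorEquiv_single, relativeFrobenius, liftAddHom_tmul,
      Finsupp.linearCombination_single, Algebra.smul_def, mul_comm]
    rfl

theorem relativeFrobenius_bijective_iff [CharP S p] (b : Basis I R S) :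
    Function.Bijective (relativeFrobenius p R S) ↔
      LinearIndependent R (fun i => b i ^ p) ∧
        Submodule.span R (Set.range fun i => b i ^ p) = ⊤ := by
  classical
  rw [← Finsupp.bijective_linearCombination_iff,
    ← Function.Bijective.of_comp_iff _ (b.frobTwistTensorEquiv (p := p)).bijective]
  exact iff_of_eq (congrArg _ (funext b.relativeFrobenius_frobTwistTensorEquiv))

theorem pow_pow_basis_of_relativeFrobenius_bijective [CharP S p]
    (hbij : Function.Bijective (relativeFrobenius p R S)) (l : ℕ) (b : Basis I R S) :
    LinearIndependent R (fun i => b i ^ p ^ l) ∧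
      Submodule.span R (Set.range fun i => b i ^ p ^ l) = ⊤ := by
  induction l generalizing b with
  | zero => simpa only [pow_zero, pow_one] using ⟨b.linearIndependent, b.span_eq⟩
  | succ l ih =>
    obtain ⟨hli, hspan⟩ := b.relativeFrobenius_bijective_iff.mp hbij
    simpa only [Basis.coe_mk, pow_succ', pow_mul] using ih (Basis.mk hli hspan.ge)

end Module.Basis

/-- for a commutative algebra `S` over a commutative ring `R` of
characteristic `p`, free as an `R`-module with basis `(s i)`, the following are
equivalent: (1) the relative Frobenius is an isomorphism (`S` is relatively perfect);
(2) for every `l`, the `p^l`-th powers of the `s i` form an `R`-basis of `S`;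
(3) the `p`-th powers of the `s i` form an `R`-basis of `S`. -/
theorem characterise_relatively_perfect (p : ℕ) [Fact p.Prime] (R S : Type*)
    [CommRing R] [CommRing S] [Algebra R S] [CharP R p] [CharP S p]
    {I : Type*} (s : I → S) (hli : LinearIndependent R s)
    (hgen : Submodule.span R (Set.range s) = ⊤) :
    List.TFAE
      [Function.Bijective (relativeFrobenius p R S),
       ∀ l : ℕ, LinearIndependent R (fun i => s i ^ p ^ l) ∧
         Submodule.span R (Set.range fun i => s i ^ p ^ l) = ⊤,
       LinearIndependent R (fun i => s i ^ p) ∧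
         Submodule.span R (Set.range fun i => s i ^ p) = ⊤] := by
  let b := Module.Basis.mk hli hgen.ge
  have hb : ⇑b = s := Module.Basis.coe_mk hli hgen.ge
  tfae_have 1 ↔ 3 := hb ▸ b.relativeFrobenius_bijective_iff
  tfae_have 1 → 2 := fun hbij l => hb ▸ b.pow_pow_basis_of_relativeFrobenius_bijective hbij l
  tfae_have 2 → 3 := fun h => by simpa only [pow_one] using h 1
  tfae_finish
end

section
/- Let A → B be a smooth map of commutative rings, and let I ⊆ B be an ideal with I² = 0 such that A → B/I is formally smooth. Then I = 0. -/
/-! A section `s` of `B → B ⧸ I` makes `I` a direct summand of `(B ⧸ I) ⊗[B] Ω[B⁄A]`, so `I` is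
finitely generated, and if `I ≠ 0` Nakayama gives a surjection `φ : I → B ⧸ q` onto a residue
field; pick `x ∈ I` with `φ x = 1`. Then `D b = φ (b - s (b mod I))` is a derivation `B → B ⧸ q`
with `D x = 1`. As `B` is formally smooth, the first-order deformation `b ↦ b + D b • X` over
`(B ⧸ q)[X] ⧸ (X²)` lifts to `(B ⧸ q)[X] ⧸ (X³)`; since `x² = 0` and `x ∈ q`, the `X²`-coefficient
of the lift of `x²` is `(D x)² = 1`, a contradiction. -/

universe u

open Polynomial TensorProduct

theorem Ideal.Quotient.isNilpotent_ker_factor {S : Type*} [CommRing S] {I J : Ideal S}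
    (hIJ : I ≤ J) {n : ℕ} (hJ : J ^ n ≤ I) :
    IsNilpotent (RingHom.ker (Ideal.Quotient.factor hIJ)) :=
  ⟨n, by
    rwa [Ideal.Quotient.factor_ker, ← Ideal.map_pow, Ideal.zero_eq_bot,
      Ideal.map_eq_bot_iff_le_ker, Ideal.mk_ker]⟩

section SecondOrder

variable {A B R : Type*} [CommRing A] [CommRing B] [CommRing R] [Algebra A B] [Algebra B R]
  [Algebra A R] [IsScalarTower A B R]

noncomputable def Derivation.toAlgHomQuotXSq (D : Derivation A B R) :
    B →ₐ[A] R[X] ⧸ Ideal.span {(X : R[X]) ^ 2} where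
  toFun b := Ideal.Quotient.mk _ (C (algebraMap B R b) + C (D b) * X)
  map_one' := by simp
  map_mul' x y := by
    rw [← map_mul, Ideal.Quotient.eq, Ideal.mem_span_singleton]
    exact ⟨-C (D x * D y), by
      simp only [map_mul, Derivation.leibniz, Algebra.smul_def, map_add]; ring⟩
  map_zero' := by simp
  map_add' x y := by
    rw [← map_add]
    congr 1
    simp only [map_add]
    ring
  commutes' a := by
    rw [Derivation.map_algebraMap, map_zero, zero_mul, add_zero, ← IsScalarTower.algebraMap_apply,
      ← Polynomial.algebraMap_apply, Ideal.Quotient.mk_algebraMap]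

theorem Derivation.toAlgHomQuotXSq_apply (D : Derivation A B R) (b : B) :
    D.toAlgHomQuotXSq b = Ideal.Quotient.mk _ (C (algebraMap B R b) + C (D b) * X) :=
  rfl

theorem Algebra.FormallySmooth.derivation_mul_self_eq_zero [Algebra.FormallySmooth A B]
    (D : Derivation A B R) {b : B} (hb : b * b = 0) (hb' : algebraMap B R b = 0) :
    D b * D b = 0 := by
  have hle : Ideal.span {(X : R[X]) ^ 3} ≤ Ideal.span {X ^ 2} :=
    Ideal.span_singleton_le_span_singleton.mpr (pow_dvd_pow X (by norm_num))
  have hnil := Ideal.Quotient.isNilpotent_ker_factor hle (n := 2) (by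
    rw [Ideal.span_singleton_pow, Ideal.span_singleton_le_span_singleton, ← pow_mul]
    exact pow_dvd_pow X (by norm_num))
  let σ := Algebra.FormallySmooth.liftOfSurjective D.toAlgHomQuotXSq
    (Ideal.Quotient.factorₐ A hle) (Ideal.Quotient.factor_surjective hle) hnil
  obtain ⟨p, hp⟩ := Ideal.Quotient.mk_surjective (σ b)
  have h2 : X ^ 2 ∣ p - C (D b) * X := by
    have := Algebra.FormallySmooth.liftOfSurjective_apply D.toAlgHomQuotXSq
      (Ideal.Quotient.factorₐ A hle) (Ideal.Quotient.factor_surjective hle) hnil b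
    rwa [← hp, Ideal.Quotient.factorₐ_apply_mk, Derivation.toAlgHomQuotXSq_apply, hb', map_zero,
      zero_add, Ideal.Quotient.eq, Ideal.mem_span_singleton] at this
  have h3 : X ^ 3 ∣ p * p := by
    rw [← Ideal.mem_span_singleton, ← Ideal.Quotient.eq_zero_iff_mem, map_mul, hp, ← map_mul, hb,
      map_zero]
  obtain ⟨r, hr⟩ := h2
  rw [sub_eq_iff_eq_add] at hr
  have hpp : p * p = C (D b * D b) * X ^ 2 + X ^ 3 * (2 * C (D b) * r + X * r * r) := by
    rw [hr, map_mul]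
    ring
  rw [hpp, dvd_add_left (dvd_mul_right _ _), Polynomial.X_pow_dvd_iff] at h3
  have hcoeff := h3 2 (by norm_num)
  rwa [Polynomial.coeff_C_mul_X_pow, if_pos rfl] at hcoeff

end SecondOrder

theorem Module.Finite.exists_isMaximal_surjective_toQuotient {R M : Type*} [CommRing R]
    [AddCommGroup M] [Module R M] [Module.Finite R M] [Nontrivial M] :
    ∃ (q : Ideal R) (_ : q.IsMaximal) (φ : M →ₗ[R] R ⧸ q), Function.Surjective φ := by
  obtain ⟨N, hN, -⟩ := (eq_top_or_exists_le_coatom (⊥ : Submodule R M)).resolve_left bot_ne_top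
  have : IsSimpleModule R (M ⧸ N) := isSimpleModule_iff_isCoatom.mpr hN
  obtain ⟨q, hq, ⟨e⟩⟩ := isSimpleModule_iff_quot_maximal.mp this
  exact ⟨q, hq, e.toLinearMap ∘ₗ N.mkQ, e.surjective.comp N.mkQ_surjective⟩

section OfSection

variable {A B S : Type*} [CommRing A] [CommRing B] [CommRing S] [Algebra A B] [Algebra B S]
  [Algebra A S] [IsScalarTower A B S] (g : S →ₐ[A] B)
  (hK : RingHom.ker (algebraMap B S) ^ 2 = ⊥)
  (hg : (IsScalarTower.toAlgHom A B S).comp g = AlgHom.id A S)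
include hK hg

theorem Module.Finite.ker_algebraMap_of_section [Algebra.EssFiniteType A B] :
    Module.Finite B (RingHom.ker (algebraMap B S)) := by
  have hsurj : Function.Surjective (algebraMap B S) :=
    fun s => ⟨g s, by simpa using AlgHom.congr_fun hg s⟩
  have : Module.Finite B S := Module.Finite.of_surjective (Algebra.linearMap B S) hsurj
  have : Module.Finite B (S ⊗[B] Ω[B⁄A]) := Module.Finite.trans S _
  exact Module.Finite.of_surjective (retractionOfSectionOfKerSqZero g hK hg)
    (Function.LeftInverse.surjective
      (LinearMap.congr_fun (retractionOfSectionOfKerSqZero_comp_kerToTensor g hK hg)))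

theorem Algebra.FormallySmooth.ker_algebraMap_eq_bot_of_section [Algebra.FormallySmooth A B]
    [Algebra.EssFiniteType A B] : RingHom.ker (algebraMap B S) = ⊥ := by
  by_contra hne
  have : Nontrivial (RingHom.ker (algebraMap B S)) := Submodule.nontrivial_iff_ne_bot.mpr hne
  have := Module.Finite.ker_algebraMap_of_section g hK hg
  obtain ⟨q, hq, φ, hφ⟩ := Module.Finite.exists_isMaximal_surjective_toQuotient
    (R := B) (M := RingHom.ker (algebraMap B S))
  obtain ⟨x, hx⟩ := hφ 1
  let D : Derivation A B (B ⧸ q) :=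
    (φ ∘ₗ retractionOfSectionOfKerSqZero g hK hg ∘ₗ TensorProduct.mk B S Ω[B⁄A] 1).compDer
      (KaehlerDifferential.D A B)
  have hDx : D x = 1 := by
    have hret : retractionOfSectionOfKerSqZero g hK hg (1 ⊗ₜ KaehlerDifferential.D A B x) = x := by
      ext
      simp [RingHom.mem_ker.mp x.2]
    simpa [D, hret] using hx
  have hxx : (x : B) * x = 0 := by
    rw [← Ideal.mem_bot, ← hK, pow_two]
    exact Ideal.mul_mem_mul x.2 x.2
  have hxq : algebraMap B (B ⧸ q) x = 0 := by
    have hxsmul : (x : B) • x = 0 := Subtype.ext hxx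
    rw [← mul_one (algebraMap B (B ⧸ q) x), ← hx, ← Algebra.smul_def, ← map_smul, hxsmul, map_zero]
  have hD := Algebra.FormallySmooth.derivation_mul_self_eq_zero D hxx hxq
  rw [hDx, one_mul] at hD
  exact one_ne_zero hD

end OfSection

/-- If `A → B` is smooth, `I ⊆ B` is a square-zero ideal, and `A → B/I` is
formally smooth, then `I = 0`. -/
theorem no_square_zero_sub_formally_smooth_ideals
    (A B : Type u) [CommRing A] [CommRing B] [Algebra A B]
    [Algebra.Smooth A B] (I : Ideal B) (hI : I * I = ⊥)
    (h : Algebra.FormallySmooth A (B ⧸ I)) : I = ⊥ := by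
  have hker : RingHom.ker (algebraMap B (B ⧸ I)) = I := by
    rw [Ideal.Quotient.algebraMap_eq, Ideal.mk_ker]
  have hI2 : I ^ 2 = ⊥ := by rwa [pow_two]
  let s := Algebra.FormallySmooth.lift I ⟨2, hI2⟩ (AlgHom.id A (B ⧸ I))
  rw [← hker] at hI2 ⊢
  exact Algebra.FormallySmooth.ker_algebraMap_eq_bot_of_section s hI2
    (Algebra.FormallySmooth.comp_lift _ _ _)
end

section
/- Let k be a reduced commutative ring of characteristic p. Then for every Witt vector w ∈ W(k[X₁,…,Xₙ]) and every ε > 0, γ_ε(p·w) = γ_ε(w) + 1, where γ_ε(w) = inf { i + ε p^{-i}·(−deg(w_i)) : i ∈ ℕ } on Witt coordinates. -/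
/-!
Multiplication by `p` on `W(A)` for an `𝔽_p`-algebra `A` is `V ∘ W(Frob)`, so the coordinates of
`p·w` are `0, w₀^p, w₁^p, …`. Over a reduced ring of characteristic `p`, `w_i^p` vanishes exactly
when `w_i` does and has `p` times its total degree. Hence the `i`-th term of `γ_ε(w)` reappears,
increased by `1`, as the `(i+1)`-th term of `γ_ε(p·w)`, since `p^{-(i+1)}·p·deg w_i = p^{-i}·deg w_i`;
the new `0`-th term is `+∞`.
-/

open WittVector
open scoped Classical

/-- The Gauss-norm-style map `γ_ε` on Witt vectors over a polynomial ring: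
`γ_ε(w) = inf { i + ε p^{-i}·(−deg(w_i)) : i ∈ ℕ }`, with the convention that a zero
coordinate contributes `+∞` (its degree is `−∞`). -/
noncomputable def gaussGamma (p : ℕ) [Fact p.Prime] {n : ℕ} (k : Type*) [CommRing k]
    (ε : ℝ) (w : WittVector p (MvPolynomial (Fin n) k)) : EReal :=
  ⨅ i : ℕ,
    if w.coeff i = 0 then (⊤ : EReal)
    else (((i : ℝ) - ε * ((p : ℝ)⁻¹) ^ i * ((w.coeff i).totalDegree : ℝ) : ℝ) : EReal)

namespace MvPolynomial

variable {σ R S : Type*} [CommSemiring R] [CommSemiring S]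

theorem totalDegree_map_of_injective {f : R →+* S} (hf : Function.Injective f)
    (Q : MvPolynomial σ R) : (map f Q).totalDegree = Q.totalDegree := by
  simp only [totalDegree, support_map_of_injective Q hf]

theorem totalDegree_pow_expChar {k : Type*} [CommRing k] [IsReduced k] (p : ℕ) [ExpChar k p]
    (Q : MvPolynomial σ k) : (Q ^ p).totalDegree = Q.totalDegree * p := by
  rw [← map_frobenius_expand, totalDegree_map_of_injective (frobenius_inj k p),
    totalDegree_expand]

end MvPolynomial

namespace EReal

theorem iInf_add_coe {ι : Sort*} (f : ι → EReal) (c : ℝ) :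
    ⨅ i, (f i + c) = (⨅ i, f i) + c := by
  have hcont : ContinuousAt (· + (c : EReal)) (⨅ i, f i) :=
    (continuousAt_add (Or.inr (coe_ne_bot c)) (Or.inr (coe_ne_top c))).comp
      (continuousAt_id.prodMk continuousAt_const)
  exact (Monotone.map_iInf_of_continuousAt hcont (fun _ _ h => add_le_add_left h _)
    (top_add_coe c)).symm

end EReal

section GaussGamma

open MvPolynomial

noncomputable def gaussGammaTerm (p : ℕ) {σ k : Type*} [CommRing k] (ε : ℝ) (i : ℕ)
    (Q : MvPolynomial σ k) : EReal :=
  if Q = 0 then ⊤ else (((i : ℝ) - ε * ((p : ℝ)⁻¹) ^ i * (Q.totalDegree : ℝ) : ℝ) : EReal)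

theorem gaussGamma_eq_iInf_gaussGammaTerm (p : ℕ) [Fact p.Prime] {n : ℕ} (k : Type*)
    [CommRing k] (ε : ℝ) (w : WittVector p (MvPolynomial (Fin n) k)) :
    gaussGamma p k ε w = ⨅ i, gaussGammaTerm p ε i (w.coeff i) := by
  -- not `rfl`: only `gaussGamma` decides `_ = 0` through `DecidableEq (Fin n)`
  unfold gaussGamma gaussGammaTerm
  congr!

theorem gaussGammaTerm_zero (p : ℕ) {σ k : Type*} [CommRing k] (ε : ℝ) (i : ℕ) :
    gaussGammaTerm p ε i (0 : MvPolynomial σ k) = ⊤ :=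
  if_pos rfl

theorem gaussGammaTerm_succ_pow (p : ℕ) {σ k : Type*} [CommRing k] [ExpChar k p] [IsReduced k]
    (ε : ℝ) (i : ℕ) (Q : MvPolynomial σ k) :
    gaussGammaTerm p ε (i + 1) (Q ^ p) = gaussGammaTerm p ε i Q + 1 := by
  have hp : p ≠ 0 := expChar_ne_zero k p
  by_cases hQ : Q = 0
  · rw [hQ, zero_pow hp, gaussGammaTerm_zero, gaussGammaTerm_zero]
    exact (EReal.top_add_coe 1).symm
  · rw [gaussGammaTerm, gaussGammaTerm, if_neg ((pow_ne_zero_iff hp).mpr hQ), if_neg hQ,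
      totalDegree_pow_expChar, ← EReal.coe_one, ← EReal.coe_add]
    congr 1
    have hpR : (p : ℝ) ≠ 0 := Nat.cast_ne_zero.mpr hp
    push_cast
    rw [pow_succ]
    field_simp
    ring

end GaussGamma

theorem gaussGamma_p_mul_general (p : ℕ) [Fact p.Prime] {n : ℕ} (k : Type*) [CommRing k]
    [CharP k p] [IsReduced k] (ε : ℝ)
    (w : WittVector p (MvPolynomial (Fin n) k)) :
    gaussGamma p k ε ((p : WittVector p (MvPolynomial (Fin n) k)) * w) =
      gaussGamma p k ε w + 1 := by
  have hcoeff_succ (i : ℕ) : ((p : WittVector p _) * w).coeff (i + 1) = w.coeff i ^ p := by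
    rw [mul_comm, WittVector.mul_charP_coeff_succ]
  have hcoeff_zero : ((p : WittVector p _) * w).coeff 0 = 0 := by
    rw [mul_comm, WittVector.mul_charP_coeff_zero]
  rw [gaussGamma_eq_iInf_gaussGammaTerm, gaussGamma_eq_iInf_gaussGammaTerm, ← inf_iInf_nat_succ,
    hcoeff_zero, gaussGammaTerm_zero, top_inf_eq]
  simp_rw [hcoeff_succ, gaussGammaTerm_succ_pow]
  exact_mod_cast EReal.iInf_add_coe _ 1

/-- if `k` is a reduced commutative ring of characteristic `p`, then for
every Witt vector `w ∈ W(k[X₁,…,Xₙ])` and every `ε > 0`,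
`γ_ε(p·w) = γ_ε(w) + 1`. -/
theorem gaussGamma_p_mul (p : ℕ) [Fact p.Prime] {n : ℕ} (k : Type*) [CommRing k]
    [CharP k p] [IsReduced k] (ε : ℝ) (hε : 0 < ε)
    (w : WittVector p (MvPolynomial (Fin n) k)) :
    gaussGamma p k ε ((p : WittVector p (MvPolynomial (Fin n) k)) * w) =
      gaussGamma p k ε w + 1 :=
  gaussGamma_p_mul_general p k ε w
end

section
/- Let R̄ be a commutative ring of characteristic p and S̄ a commutative R̄-algebra. Then the kernel of the natural surjection W(S̄) ⊗_{W(R̄)} R̄ → S̄ (induced by the Witt coordinate projection W(S̄) → S̄ and the projection W(R̄) → R̄) consists of square-zero elements, i.e. every element x of this kernel satisfies x² = 0. -/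
/-!
Since `W(R̄) → R̄` is surjective, every element of `W(S̄) ⊗_{W(R̄)} R̄` is a pure tensor `s ⊗ 1`,
and it lies in the kernel exactly when the zeroth coordinate of `s` vanishes, i.e. `s = V y`.
The projection formula `V x * z = V (x * F z)` together with `F V = p` gives
`V y * V y = p • V (y * y)`, and `p` kills the right-hand factor `R̄`.
-/

open WittVector

section

variable (p : ℕ) [Fact p.Prime] (R S : Type*) [CommRing R] [CommRing S] [Algebra R S]
  [CharP R p] [CharP S p]

/-- `W(S)` as a `W(R)`-algebra via the functorial map. -/
noncomputable instance wittAlg : Algebra (WittVector p R) (WittVector p S) :=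
  (WittVector.map (algebraMap R S)).toAlgebra

/-- `R` as a `W(R)`-algebra via the zeroth coordinate (= zeroth ghost component)
projection. -/
noncomputable instance wittProjAlg : Algebra (WittVector p R) R :=
  (WittVector.ghostComponent 0).toAlgebra

/-- `S` as a `W(R)`-algebra, via the zeroth coordinate projection followed by the
structure morphism. -/
noncomputable instance wittProjAlg' : Algebra (WittVector p R) S :=
  ((algebraMap R S).comp (WittVector.ghostComponent 0)).toAlgebra

/-- The zeroth coordinate projection `W(S) → S`, as a `W(R)`-algebra morphism. -/
noncomputable def ghostZeroAlgHom : WittVector p S →ₐ[WittVector p R] S :=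
  { (WittVector.ghostComponent 0 : WittVector p S →+* S) with
    commutes' := fun r => by
      show WittVector.ghostComponent 0 (WittVector.map (algebraMap R S) r) =
        algebraMap R S (WittVector.ghostComponent 0 r)
      simp [WittVector.ghostComponent_apply, wittPolynomial_zero,
        WittVector.map_coeff] }

/-- The structure morphism `R → S`, as a `W(R)`-algebra morphism. -/
noncomputable def structAlgHom : R →ₐ[WittVector p R] S :=
  { (algebraMap R S : R →+* S) with commutes' := fun _ => rfl }

/-- The natural surjection `W(S̄) ⊗_{W(R̄)} R̄ → S̄`. -/
noncomputable def wittTensorProj :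
    TensorProduct (WittVector p R) (WittVector p S) R →ₐ[WittVector p R] S :=
  Algebra.TensorProduct.productMap (ghostZeroAlgHom p R S) (structAlgHom p R S)

end

namespace WittVector

variable {p : ℕ} [Fact p.Prime] {T : Type*} [CommRing T]

theorem ghostComponent_zero_eq_constantCoeff :
    ghostComponent 0 = (constantCoeff : WittVector p T →+* T) := by
  ext x
  simp [ghostComponent_apply, wittPolynomial_zero]

theorem ghostComponent_zero_surjective :
    Function.Surjective (ghostComponent 0 : WittVector p T →+* T) := by
  rw [ghostComponent_zero_eq_constantCoeff]
  exact constantCoeff_surjective p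

theorem exists_verschiebung_eq_of_coeff_zero {x : WittVector p T} (hx : x.coeff 0 = 0) :
    ∃ y, verschiebung y = x :=
  ⟨x.shift 1, by
    rw [verschiebung_shift x 0 (by simpa using hx)]
    ext n
    simp [shift_coeff]⟩

theorem verschiebung_mul_verschiebung (x y : WittVector p T) :
    verschiebung x * verschiebung y = p • verschiebung (x * y) := by
  rw [← verschiebung_mul_frobenius, frobenius_verschiebung, ← map_nsmul, nsmul_eq_mul]
  congr 1
  ring

end WittVector

theorem wittTensorProj_tmul_one {p : ℕ} [Fact p.Prime] {R S : Type*} [CommRing R] [CommRing S]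
    [Algebra R S] (s : WittVector p S) : wittTensorProj p R S (s ⊗ₜ (1 : R)) = s.coeff 0 := by
  simp [wittTensorProj, ghostZeroAlgHom, structAlgHom, ghostComponent_zero_eq_constantCoeff]

section

variable (p : ℕ) [Fact p.Prime] (R S : Type*) [CommRing R] [CommRing S] [Algebra R S]
  [CharP R p] [CharP S p]

/-- the kernel of the natural surjection `W(S̄) ⊗_{W(R̄)} R̄ → S̄`
consists of square-zero elements. -/
theorem wittTensorProj_ker_squareZero :
    ∀ x ∈ RingHom.ker (wittTensorProj p R S).toRingHom, x * x = 0 := by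
  intro x hx
  obtain ⟨s, rfl⟩ :=
    TensorProduct.flip_mk_surjective (WittVector p S) (ghostComponent_zero_surjective (T := R)) x
  obtain ⟨y, rfl⟩ := exists_verschiebung_eq_of_coeff_zero (x := s) <| by
    simpa [wittTensorProj_tmul_one] using hx
  calc _ = ((p : WittVector p R) • verschiebung (y * y)) ⊗ₜ (1 : R) := by
        rw [LinearMap.flip_apply, TensorProduct.mk_apply, Algebra.TensorProduct.tmul_mul_tmul,
          mul_one, verschiebung_mul_verschiebung, Nat.cast_smul_eq_nsmul]
    _ = verschiebung (y * y) ⊗ₜ ((p : WittVector p R) • (1 : R)) := TensorProduct.smul_tmul _ _ _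
    _ = 0 := by
        rw [Algebra.smul_def, map_natCast, CharP.cast_eq_zero, zero_mul, TensorProduct.tmul_zero]

end
end

section
/- Let R̄ be a quotient of k[X₁,…,Xₙ] by a surjection φ, where k has characteristic p, and let γ_{ε,φ,b}(w) = inf { u + ε p^{-u} v_{φ,b}(w_u) : u ∈ ℕ } on Witt vectors w = (w_u) ∈ W(R̄). Let w ∈ W(R̄) be overconvergent (i.e. γ_{ε₀,φ,b}(w) ≠ −∞ for some ε₀ > 0) with w_0 = 0, and let E < 1 be a real number. Then there exists δ > 0 such that for all ε ∈ (0, δ], γ_{ε,φ,b}(w) ≥ E. -/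
/-!
Write `q_u = p^{-u}` and `v_u = v_{φ,b}(w_u)`. Each term `u + ε q_u v_u` of the Gauss norm is affine
in `ε`, so for `0 < ε ≤ ε₀` it equals `(1 - s) u + s (u + ε₀ q_u v_u)` with `s = ε / ε₀`. Bounding the
`ε₀`-terms below by a real `c < 1` (overconvergence) and using `u ≥ 1` for `u ≠ 0` gives
`γ_ε(w) ≥ 1 - s (1 - c)`, which is `≥ E` once `ε` is small; the term `u = 0` is `+∞` since `w₀ = 0`.
-/

open WittVector

/-- The weighted-degree pseudovaluation on a polynomial ring:
`v_b(P) = min { −Σᵢ bᵢ jᵢ : the coefficient of X^j in P is nonzero }`, with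
`v_b(0) = +∞`. -/
noncomputable def weightedVal {n : ℕ} {k : Type*} [CommRing k] (b : Fin n → ℝ)
    (P : MvPolynomial (Fin n) k) : EReal :=
  sInf ((fun j : Fin n →₀ ℕ => ((-(∑ i, b i * (j i : ℝ)) : ℝ) : EReal)) ''
    (P.support : Set (Fin n →₀ ℕ)))

/-- The pseudovaluation on a quotient `R̄` of the polynomial ring, defined by taking the
supremum of `v_b` over all preimages. -/
noncomputable def weightedValQuot {n : ℕ} {k R : Type*} [CommRing k] [CommRing R]
    (φ : MvPolynomial (Fin n) k →+* R) (b : Fin n → ℝ) (r : R) : EReal :=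
  sSup (weightedVal b '' (φ ⁻¹' {r}))

/-- The Davis–Langer–Zink Gauss norm on Witt vectors over `R̄`:
`γ_{ε,φ,b}(w) = inf { u + ε p^{-u} v_{φ,b}(w_u) : u ∈ ℕ }`. -/
noncomputable def gaussNorm (p : ℕ) [Fact p.Prime] {n : ℕ} {k R : Type*} [CommRing k]
    [CommRing R] (φ : MvPolynomial (Fin n) k →+* R) (b : Fin n → ℝ) (ε : ℝ)
    (w : WittVector p R) : EReal :=
  ⨅ u : ℕ, ((u : EReal) + ((ε * ((p : ℝ)⁻¹) ^ u : ℝ) : EReal) *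
    weightedValQuot φ b (w.coeff u))

theorem weightedVal_zero {n : ℕ} {k : Type*} [CommRing k] (b : Fin n → ℝ) :
    weightedVal b (0 : MvPolynomial (Fin n) k) = ⊤ := by
  simp [weightedVal]

theorem weightedValQuot_zero {n : ℕ} {k R : Type*} [CommRing k] [CommRing R]
    (φ : MvPolynomial (Fin n) k →+* R) (b : Fin n → ℝ) :
    weightedValQuot φ b 0 = ⊤ :=
  top_le_iff.mp <| weightedVal_zero (k := k) b ▸ le_sSup ⟨0, map_zero φ, rfl⟩

theorem EReal.coe_add_div_mul_sub_le {u c a a' : ℝ} {x : EReal} (ha : 0 < a) (ha' : 0 < a')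
    (h : (c : EReal) ≤ u + a * x) : ((u + a' / a * (c - u) : ℝ) : EReal) ≤ u + a' * x := by
  induction x using EReal.rec with
  | bot => simp [EReal.coe_mul_bot_of_pos ha] at h
  | top => simp [EReal.coe_mul_top_of_pos ha']
  | coe x =>
    norm_cast at h ⊢
    have h' : a' / a * (c - u) ≤ a' / a * (a * x) :=
      mul_le_mul_of_nonneg_left (by linarith) (by positivity)
    have hx : a' / a * (a * x) = a' * x := by field_simp
    linarith

theorem gaussNorm_lowerbound_of_verschiebung_general (p : ℕ) [Fact p.Prime] {n : ℕ}
    (k R : Type*) [CommRing k] [CommRing R]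
    (φ : MvPolynomial (Fin n) k →+* R)
    (b : Fin n → ℝ)
    (w : WittVector p R) (hw0 : w.coeff 0 = 0)
    (hover : ∃ ε₀ : ℝ, 0 < ε₀ ∧ gaussNorm p φ b ε₀ w ≠ ⊥)
    (E : ℝ) (hE : E < 1) :
    ∃ δ : ℝ, 0 < δ ∧ ∀ ε : ℝ, 0 < ε → ε ≤ δ → (E : EReal) ≤ gaussNorm p φ b ε w := by
  obtain ⟨ε₀, hε₀, hne⟩ := hover
  obtain ⟨c, -, hc⟩ := EReal.lt_iff_exists_real_btwn.mp (bot_lt_iff_ne_bot.mpr hne)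
  have hcE : min c E < 1 := (min_le_right c E).trans_lt hE
  refine ⟨ε₀ * (1 - E) / (1 - min c E), by have := sub_pos.mpr hE; positivity,
    fun ε hε hεδ => le_iInf fun u => ?_⟩
  rcases u.eq_zero_or_pos with rfl | hu
  · simp [hw0, weightedValQuot_zero, EReal.coe_mul_top_of_pos hε]
  have hq : 0 < ((p : ℝ)⁻¹) ^ u := by have := (Fact.out : p.Prime).pos; positivity
  have hterm := EReal.coe_add_div_mul_sub_le (u := u) (mul_pos hε₀ hq) (mul_pos hε hq)
    (EReal.coe_natCast ▸ hc.le.trans (iInf_le _ u))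
  refine le_trans ?_ (EReal.coe_natCast (n := u) ▸ hterm)
  rw [EReal.coe_le_coe_iff, mul_div_mul_right _ _ hq.ne']
  set s := ε / ε₀
  have hs : s * (1 - min c E) ≤ 1 - E := by
    rw [div_mul_eq_mul_div, div_le_iff₀ hε₀]
    linarith [(le_div_iff₀ (sub_pos.mpr hcE)).mp hεδ]
  have hs1 : s ≤ 1 := by nlinarith [min_le_right c E]
  have hu1 : (1 : ℝ) ≤ u := by exact_mod_cast hu
  nlinarith [mul_nonneg (sub_nonneg.mpr hs1) (sub_nonneg.mpr hu1),
    mul_nonneg (div_pos hε hε₀).le (sub_nonneg.mpr (min_le_left c E))]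

/-- if `w ∈ W(R̄)` is overconvergent (i.e. `γ_{ε₀,φ,b}(w) ≠ −∞` for some
`ε₀ > 0`) and `w₀ = 0`, then for every real `E < 1` there is `δ > 0` such that for all
`ε ∈ (0, δ]`, `γ_{ε,φ,b}(w) ≥ E`. -/
theorem gaussNorm_lowerbound_of_verschiebung (p : ℕ) [Fact p.Prime] {n : ℕ}
    (k R : Type*) [CommRing k] [CommRing R] [CharP k p] [CharP R p]
    (φ : MvPolynomial (Fin n) k →+* R) (hφ : Function.Surjective φ)
    (b : Fin n → ℝ) (hb : ∀ i, 0 < b i)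
    (w : WittVector p R) (hw0 : w.coeff 0 = 0)
    (hover : ∃ ε₀ : ℝ, 0 < ε₀ ∧ gaussNorm p φ b ε₀ w ≠ ⊥)
    (E : ℝ) (hE : E < 1) :
    ∃ δ : ℝ, 0 < δ ∧ ∀ ε : ℝ, 0 < ε → ε ≤ δ → (E : EReal) ≤ gaussNorm p φ b ε w :=
  gaussNorm_lowerbound_of_verschiebung_general p k R φ b w hw0 hover E hE
end
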